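/- arXiv:2405.20188 — 4 statements merged into one kernel-verified Lean document; each statement's English description precedes it below -/
import Mathlib

section
/- Let d, nᵗ, n ∈ ℝ³ with d ≠ 0, let R₀ be a 3×3 rotation matrix, set x₀ := R₀ n and h* := x₀ − (((x₀ + nᵗ)·d)/‖d‖²) d. Then for every 3×3 rotation matrix R, [(R n + nᵗ)·d]² ≤ ‖d‖² ‖R n − h*‖²; that is, the surrogate f̄(R | R₀) := ‖d‖² ‖R n − h*‖² bounds f(R) := [(R n + nᵗ)·d]² from above on SO(3). -/
open scoped RealInnerProductSpace
open Matrix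

noncomputable section

def IsRotation (R : Matrix (Fin 3) (Fin 3) ℝ) : Prop := Rᵀ * R = 1 ∧ R.det = 1

section HyperplaneProjection

variable {E : Type*} [NormedAddCommGroup E] [InnerProductSpace ℝ E]

theorem inner_sub_div_norm_sq_smul_add_eq_zero (x t d : E) :
    ⟪x - (⟪x + t, d⟫ / ‖d‖ ^ 2) • d + t, d⟫ = 0 := by
  rcases eq_or_ne d 0 with rfl | hd
  · simp
  have hd2 : ‖d‖ ^ 2 ≠ 0 := by positivity
  rw [sub_add_eq_add_sub, inner_sub_left, real_inner_smul_left, real_inner_self_eq_norm_sq,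
    div_mul_cancel₀ _ hd2, sub_self]

theorem sq_inner_add_le_of_inner_add_eq_zero {u h t d : E} (hh : ⟪h + t, d⟫ = 0) :
    ⟪u + t, d⟫ ^ 2 ≤ ‖d‖ ^ 2 * ‖u - h‖ ^ 2 := by
  have hshift : ⟪u + t, d⟫ = ⟪u - h, d⟫ := by
    rw [← add_zero ⟪u - h, d⟫, ← hh, ← inner_add_left]
    congr 1
    abel
  calc ⟪u + t, d⟫ ^ 2 = |⟪u - h, d⟫| ^ 2 := by rw [hshift, sq_abs]
    _ ≤ (‖u - h‖ * ‖d‖) ^ 2 := by gcongr; exact abs_real_inner_le_norm _ _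
    _ = ‖d‖ ^ 2 * ‖u - h‖ ^ 2 := by ring

end HyperplaneProjection

theorem surrogate_upper_bound_general
    (d nt n : EuclideanSpace ℝ (Fin 3))
    (x₀ hstar : EuclideanSpace ℝ (Fin 3))
    (hhstar : hstar = x₀ - (⟪x₀ + nt, d⟫ / ‖d‖ ^ 2) • d) :
    ∀ R : Matrix (Fin 3) (Fin 3) ℝ, IsRotation R →
      ⟪Matrix.toEuclideanLin R n + nt, d⟫ ^ 2
        ≤ ‖d‖ ^ 2 * ‖Matrix.toEuclideanLin R n - hstar‖ ^ 2 := by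
  intro R _
  subst hhstar
  exact sq_inner_add_le_of_inner_add_eq_zero (inner_sub_div_norm_sq_smul_add_eq_zero x₀ nt d)

/-- First surrogate condition (Eq. (15), Appendix A-B): with `x₀ = R₀ n` and
`h* = x₀ − (((x₀ + nᵗ)·d)/‖d‖²) d`, the surrogate `f̄(R | R₀) = ‖d‖² ‖R n − h*‖²`
bounds `f(R) = [(R n + nᵗ)·d]²` from above on SO(3). -/
theorem surrogate_upper_bound
    (d nt n : EuclideanSpace ℝ (Fin 3)) (hd : d ≠ 0)
    (R₀ : Matrix (Fin 3) (Fin 3) ℝ) (hR₀ : IsRotation R₀)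
    (x₀ hstar : EuclideanSpace ℝ (Fin 3))
    (hx₀ : x₀ = Matrix.toEuclideanLin R₀ n)
    (hhstar : hstar = x₀ - (⟪x₀ + nt, d⟫ / ‖d‖ ^ 2) • d) :
    ∀ R : Matrix (Fin 3) (Fin 3) ℝ, IsRotation R →
      ⟪Matrix.toEuclideanLin R n + nt, d⟫ ^ 2
        ≤ ‖d‖ ^ 2 * ‖Matrix.toEuclideanLin R n - hstar‖ ^ 2 :=
  surrogate_upper_bound_general d nt n x₀ hstar hhstar
end
end

section
/- Let d, nᵗ, n ∈ ℝ³ with d ≠ 0, let α ≥ 0 and ω ≥ 0 be real numbers, let J be a finite index set with vectors e_j, f_j ∈ ℝ³ for j ∈ J, let R₀ be a 3×3 rotation matrix, and set h* := R₀ n − (((R₀ n + nᵗ)·d)/‖d‖²) d. Define F(R) := α [(R n + nᵗ)·d]² + ω ∑_{j∈J} ‖e_j − R f_j‖² and F̄(R) := α ‖d‖² ‖R n − h*‖² + ω ∑_{j∈J} ‖e_j − R f_j‖². If R₁ is a 3×3 rotation matrix minimizing F̄ over all 3×3 rotation matrices, then F(R₁) ≤ F(R₀). -/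
open scoped RealInnerProductSpace
open Matrix

noncomputable section

/-- Descent guarantee for the rotation update of the MM solver: with
`h* = R₀ n − (((R₀ n + nᵗ)·d)/‖d‖²) d`,
`F(R) = α [(R n + nᵗ)·d]² + ω ∑ⱼ ‖eⱼ − R fⱼ‖²` and
`F̄(R) = α ‖d‖² ‖R n − h*‖² + ω ∑ⱼ ‖eⱼ − R fⱼ‖²`, any rotation `R₁` minimizing `F̄`
over all rotations satisfies `F(R₁) ≤ F(R₀)`. -/
theorem rotation_update_descent
    (d nt n : EuclideanSpace ℝ (Fin 3)) (hd : d ≠ 0)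
    (a w : ℝ) (ha : 0 ≤ a) (hw : 0 ≤ w)
    {J : Type*} [Fintype J] (e f : J → EuclideanSpace ℝ (Fin 3))
    (R₀ : Matrix (Fin 3) (Fin 3) ℝ) (hR₀ : IsRotation R₀)
    (hstar : EuclideanSpace ℝ (Fin 3))
    (hhstar : hstar = Matrix.toEuclideanLin R₀ n
      - (⟪Matrix.toEuclideanLin R₀ n + nt, d⟫ / ‖d‖ ^ 2) • d)
    (F Fbar : Matrix (Fin 3) (Fin 3) ℝ → ℝ)
    (hF : ∀ R, F R = a * ⟪Matrix.toEuclideanLin R n + nt, d⟫ ^ 2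
      + w * ∑ j, ‖e j - Matrix.toEuclideanLin R (f j)‖ ^ 2)
    (hFbar : ∀ R, Fbar R = a * ‖d‖ ^ 2 * ‖Matrix.toEuclideanLin R n - hstar‖ ^ 2
      + w * ∑ j, ‖e j - Matrix.toEuclideanLin R (f j)‖ ^ 2)
    (R₁ : Matrix (Fin 3) (Fin 3) ℝ) (hR₁ : IsRotation R₁)
    (hmin : ∀ R, IsRotation R → Fbar R₁ ≤ Fbar R) :
    F R₁ ≤ F R₀ := by

  have hdn : (‖d‖ : ℝ) ^ 2 ≠ 0 := pow_ne_zero _ (norm_ne_zero_iff.mpr hd)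
  set c : ℝ := ⟪Matrix.toEuclideanLin R₀ n + nt, d⟫ with hc
  -- orthogonality: ⟪hstar + nt, d⟫ = 0
  have horth : ⟪hstar + nt, d⟫ = 0 := by
    rw [hhstar]
    rw [inner_add_left, inner_sub_left, real_inner_smul_left,
      real_inner_self_eq_norm_sq, div_mul_cancel₀ _ hdn]
    have : ⟪Matrix.toEuclideanLin R₀ n, d⟫ + ⟪nt, d⟫ = c := by
      rw [hc, inner_add_left]
    linarith
  -- for any R, the plane inner product equals inner with v := Rn - hstar
  have hinner : ∀ R : Matrix (Fin 3) (Fin 3) ℝ,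
      ⟪Matrix.toEuclideanLin R n + nt, d⟫
        = ⟪Matrix.toEuclideanLin R n - hstar, d⟫ := by
    intro R
    have : ⟪Matrix.toEuclideanLin R n + nt, d⟫
        = ⟪Matrix.toEuclideanLin R n - hstar, d⟫ + ⟪hstar + nt, d⟫ := by
      rw [inner_sub_left, inner_add_left, inner_add_left]; ring
    rw [this, horth, add_zero]
  -- majorization: F R ≤ Fbar R for all R
  have hmaj : ∀ R : Matrix (Fin 3) (Fin 3) ℝ, F R ≤ Fbar R := by
    intro R
    rw [hF, hFbar]
    have hCS := real_inner_mul_inner_self_le (Matrix.toEuclideanLin R n - hstar) d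
    rw [real_inner_self_eq_norm_sq, real_inner_self_eq_norm_sq] at hCS
    have h1 : ⟪Matrix.toEuclideanLin R n + nt, d⟫ ^ 2
        ≤ ‖d‖ ^ 2 * ‖Matrix.toEuclideanLin R n - hstar‖ ^ 2 := by
      rw [hinner R]; nlinarith [hCS]
    nlinarith [mul_le_mul_of_nonneg_left h1 ha]
  -- tightness at R₀ : Fbar R₀ = F R₀
  have htight : Fbar R₀ = F R₀ := by
    rw [hF, hFbar]
    have hv : Matrix.toEuclideanLin R₀ n - hstar = (c / ‖d‖ ^ 2) • d := by
      rw [hhstar]; abel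
    rw [hv]
    have : ‖(c / ‖d‖ ^ 2) • d‖ ^ 2 = (c / ‖d‖ ^ 2) ^ 2 * ‖d‖ ^ 2 := by
      rw [norm_smul]
      rw [Real.norm_eq_abs]
      rw [mul_pow, sq_abs]
    rw [this]
    have h2 : a * ‖d‖ ^ 2 * ((c / ‖d‖ ^ 2) ^ 2 * ‖d‖ ^ 2) = a * c ^ 2 := by
      field_simp
    rw [h2, hc]
  calc F R₁ ≤ Fbar R₁ := hmaj R₁
    _ ≤ Fbar R₀ := hmin R₀ hR₀
    _ = F R₀ := htight
end
end

section
/- Let n be a positive integer, let M be an n×n real symmetric positive semidefinite matrix, and let R be an n×n orthogonal matrix (RᵀR = I). Then trace(R M) ≤ trace(M). -/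
/-!
Write `M = BᵀB`. Then `trace (R M) = ∑ₖ ⟪bₖ, R bₖ⟫` over the rows `bₖ` of `B`, and each term is at
most `‖bₖ‖²` because `R` is an isometry; summing gives `trace (BᵀB) = trace M`.
-/

open Matrix
open scoped ComplexOrder

namespace Matrix

variable {ι κ : Type*} [Fintype ι]

theorem PosSemidef.exists_eq_conjTranspose_mul_self {𝕜 : Type*} [RCLike 𝕜] {A : Matrix ι ι 𝕜}
    (hA : A.PosSemidef) : ∃ B : Matrix ι ι 𝕜, A = Bᴴ * B := by
  classical
  open scoped MatrixOrder in
  exact CStarAlgebra.nonneg_iff_eq_star_mul_self.mp hA.nonneg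

theorem dotProduct_mulVec_le_dotProduct_self [DecidableEq ι] {R : Matrix ι ι ℝ} (hR : Rᵀ * R = 1)
    (v : ι → ℝ) : v ⬝ᵥ (R *ᵥ v) ≤ v ⬝ᵥ v := by
  have hnorm : R *ᵥ v ⬝ᵥ R *ᵥ v = v ⬝ᵥ v := by
    rw [dotProduct_mulVec, ← vecMul_transpose, vecMul_vecMul, hR, vecMul_one]
  -- `‖v - R v‖² = 2 ‖v‖² - 2 ⟪v, R v⟫` because `R` is an isometry
  have hdist : 0 ≤ (v - R *ᵥ v) ⬝ᵥ (v - R *ᵥ v) := dotProduct_self_star_nonneg _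
  rw [sub_dotProduct, dotProduct_sub, dotProduct_sub, hnorm, dotProduct_comm (R *ᵥ v)] at hdist
  linarith

theorem trace_mul_transpose_mul_self [Fintype κ] {α : Type*} [CommSemiring α]
    (R : Matrix ι ι α) (B : Matrix κ ι α) :
    trace (R * (Bᵀ * B)) = ∑ k, B k ⬝ᵥ (R *ᵥ B k) := by
  rw [← Matrix.mul_assoc, trace_mul_cycle, trace]
  simp only [diag_apply, mul_apply, transpose_apply, dotProduct, mulVec, Finset.mul_sum,
    Finset.sum_mul]
  refine Finset.sum_congr rfl fun k _ ↦ Finset.sum_comm.trans ?_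
  simp only [mul_comm, mul_left_comm]

end Matrix

theorem trace_orthogonal_mul_le_of_posSemidef_general
    (n : ℕ) (M R : Matrix (Fin n) (Fin n) ℝ)
    (hsym : Mᵀ = M) (hpsd : ∀ x : Fin n → ℝ, 0 ≤ x ⬝ᵥ M.mulVec x)
    (hR : Rᵀ * R = 1) :
    Matrix.trace (R * M) ≤ Matrix.trace M := by
  have hM : M.PosSemidef := .of_dotProduct_mulVec_nonneg hsym fun x ↦ by simpa using hpsd x
  obtain ⟨B, rfl⟩ := hM.exists_eq_conjTranspose_mul_self
  rw [conjTranspose_eq_transpose_of_trivial]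
  calc trace (R * (Bᵀ * B)) = ∑ k, B k ⬝ᵥ (R *ᵥ B k) := trace_mul_transpose_mul_self R B
    _ ≤ ∑ k, B k ⬝ᵥ B k := Finset.sum_le_sum fun k _ ↦ dotProduct_mulVec_le_dotProduct_self hR _
    _ = trace (Bᵀ * B) := by simpa using (trace_mul_transpose_mul_self 1 B).symm

/-- Key step of the orthogonal Procrustes argument: for a symmetric positive
semidefinite `M` and an orthogonal `R`, `trace(R M) ≤ trace M`. -/
theorem trace_orthogonal_mul_le_of_posSemidef
    (n : ℕ) (hn : 0 < n) (M R : Matrix (Fin n) (Fin n) ℝ)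
    (hsym : Mᵀ = M) (hpsd : ∀ x : Fin n → ℝ, 0 ≤ x ⬝ᵥ M.mulVec x)
    (hR : Rᵀ * R = 1) :
    Matrix.trace (R * M) ≤ Matrix.trace M :=
  trace_orthogonal_mul_le_of_posSemidef_general n M R hsym hpsd hR
end

section
/- Let n be a positive integer, let M be an n×n real symmetric positive definite matrix, and let R be an n×n orthogonal matrix (RᵀR = I) with trace(R M) = trace(M). Then R = I. -/
/-!
With `B = 1 - R`, orthogonality of `R` and symmetry of `M` give
`trace (B M Bᵀ) = 2 (trace M - trace (R M)) = 0`. Since `B M Bᵀ` is positive semidefinite,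
vanishing trace forces `B M Bᵀ = 0`, i.e. `(Bᵀ x)ᵀ M (Bᵀ x) = 0` for every `x`. Positive
definiteness of `M` then gives `Bᵀ = 0`, so `R = 1`.
-/

open Matrix

namespace Matrix

variable {m n R : Type*} [Fintype m] [Fintype n]

lemma PosDef.eq_zero_of_mul_mul_conjTranspose_eq_zero [Ring R] [PartialOrder R] [StarRing R]
    {A : Matrix n n R} (hA : A.PosDef) {B : Matrix m n R} (h : B * A * Bᴴ = 0) : B = 0 := by
  suffices hBx : ∀ x, Bᴴ *ᵥ x = 0 by
    have hBzero : Bᴴ = 0 := mulVec_injective <| funext fun x => (hBx x).trans (zero_mulVec x).symm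
    simpa using congrArg (·ᴴ) hBzero
  intro x
  by_contra hx
  have hpos := hA.dotProduct_mulVec_pos hx
  rw [star_mulVec, conjTranspose_conjTranspose, dotProduct_mulVec, vecMul_vecMul,
    ← dotProduct_mulVec, mulVec_mulVec, h, zero_mulVec, dotProduct_zero] at hpos
  exact hpos.false

variable [DecidableEq n]

lemma trace_one_sub_mul_mul_transpose_one_sub [CommRing R] {M Q : Matrix n n R}
    (hM : Mᵀ = M) (hQ : Qᵀ * Q = 1) :
    trace ((1 - Q) * M * (1 - Q)ᵀ) = 2 * (trace M - trace (Q * M)) := by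
  have hQMQ : trace (Q * M * Qᵀ) = trace M := by rw [trace_mul_cycle, hQ, one_mul]
  have hMQ : trace (M * Qᵀ) = trace (Q * M) := by
    rw [← trace_transpose, transpose_mul, transpose_transpose, hM]
  simp only [transpose_sub, transpose_one, sub_mul, mul_sub, one_mul, mul_one, trace_sub, hQMQ,
    hMQ]
  ring

end Matrix

theorem orthogonal_eq_one_of_trace_eq_of_posDef_general
    (n : ℕ) (M R : Matrix (Fin n) (Fin n) ℝ)
    (hsym : Mᵀ = M) (hpd : ∀ x : Fin n → ℝ, x ≠ 0 → 0 < x ⬝ᵥ M.mulVec x)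
    (hR : Rᵀ * R = 1) (htr : Matrix.trace (R * M) = Matrix.trace M) :
    R = 1 := by
  have hM : M.PosDef :=
    .of_dotProduct_mulVec_pos (by simpa [IsHermitian] using hsym) fun x hx => by
      simpa using hpd x hx
  have hB : (1 - R) * M * (1 - R)ᴴ = 0 := by
    rw [← (hM.posSemidef.mul_mul_conjTranspose_same _).trace_eq_zero_iff,
      conjTranspose_eq_transpose_of_trivial, trace_one_sub_mul_mul_transpose_one_sub hsym hR, htr,
      sub_self, mul_zero]
  exact (sub_eq_zero.mp (hM.eq_zero_of_mul_mul_conjTranspose_eq_zero hB)).symm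

/-- Equality case of the orthogonal Procrustes argument: if `M` is symmetric positive
definite, `R` is orthogonal and `trace(R M) = trace M`, then `R = I`. -/
theorem orthogonal_eq_one_of_trace_eq_of_posDef
    (n : ℕ) (hn : 0 < n) (M R : Matrix (Fin n) (Fin n) ℝ)
    (hsym : Mᵀ = M) (hpd : ∀ x : Fin n → ℝ, x ≠ 0 → 0 < x ⬝ᵥ M.mulVec x)
    (hR : Rᵀ * R = 1) (htr : Matrix.trace (R * M) = Matrix.trace M) :
    R = 1 :=
  orthogonal_eq_one_of_trace_eq_of_posDef_general n M R hsym hpd hR htr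
end
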